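/- If f : [0,1] → ℝ is absolutely continuous, f' ∈ L¹(0,1), and f'(t) ≤ Γ₁ for all t ∈ [0,1], then |Q(f)| ≤ (1/2 - √2/8)(Γ₁ - S), where S = f(1) - f(0) and Q(f) = ∫₀¹ f(t) dt - (√2/8) f(0) - (1 - √2/4) f(1/2) - (√2/8) f(1). -/

import Mathlib

/-!
Integrating by parts against `t ↦ t - m` on `[0, 1/2]` (with `m = c`) and on `[1/2, 1]`
(with `m = 1 - c`) writes the error of the rule `c f(0) + (1 - 2c) f(1/2) + c f(1)` as
`∫₀¹ K f'` for a piecewise affine kernel `K`. Since `∫₀¹ K = 0`, the error is also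
`-∫₀¹ K (Γ - f')`, and `Γ - f' ≥ 0` together with `|K| ≤ 1/2 - c` (valid for `c ≤ 1/4`,
in particular for `c = √2/8`) bounds it by `(1/2 - c) ∫₀¹ (Γ - f') = (1/2 - c) (Γ - S)`.
-/

open MeasureTheory Real Set

section Piecewise

variable {u v : ℝ → ℝ} {a b c : ℝ}

theorem eqOn_ite_le_left (hab : a ≤ b) :
    EqOn (fun s => if s ≤ b then u s else v s) u (uIoc a b) := fun s hs => by
  rw [uIoc_of_le hab] at hs
  simp [hs.2]

theorem eqOn_ite_le_right (hbc : b ≤ c) :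
    EqOn (fun s => if s ≤ b then u s else v s) v (uIoc b c) := fun s hs => by
  rw [uIoc_of_le hbc] at hs
  simp [not_le.2 hs.1]

theorem intervalIntegrable_ite_le (hab : a ≤ b) (hbc : b ≤ c)
    (hu : IntervalIntegrable u volume a b) (hv : IntervalIntegrable v volume b c) :
    IntervalIntegrable (fun s => if s ≤ b then u s else v s) volume a c :=
  (hu.congr (eqOn_ite_le_left hab).symm).trans (hv.congr (eqOn_ite_le_right hbc).symm)

theorem integral_ite_le (hab : a ≤ b) (hbc : b ≤ c)
    (hu : IntervalIntegrable u volume a b) (hv : IntervalIntegrable v volume b c) :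
    ∫ s in a..c, (if s ≤ b then u s else v s) = (∫ s in a..b, u s) + ∫ s in b..c, v s := by
  rw [← intervalIntegral.integral_add_adjacent_intervals (hu.congr (eqOn_ite_le_left hab).symm)
      (hv.congr (eqOn_ite_le_right hbc).symm),
    intervalIntegral.integral_congr_ae (.of_forall (eqOn_ite_le_left hab)),
    intervalIntegral.integral_congr_ae (.of_forall (eqOn_ite_le_right hbc))]

end Piecewise

theorem integral_primitive_eq {g : ℝ → ℝ} {a b : ℝ} (hg : IntervalIntegrable g volume a b)
    (m : ℝ) :
    ∫ t in a..b, (∫ s in a..t, g s)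
      = (b - m) * (∫ s in a..b, g s) + ∫ s in a..b, (m - s) * g s := by
  have hF := hg.absolutelyContinuousOnInterval_intervalIntegral left_mem_uIcc
  have hG : AbsolutelyContinuousOnInterval (fun t : ℝ => t - m) a b :=
    ContDiffOn.absolutelyContinuousOnInterval (by fun_prop)
  have hderiv : ∀ᵐ s, s ∈ uIoc a b →
      deriv (fun t => ∫ s in a..t, g s) s * (s - m) = -((m - s) * g s) := by
    filter_upwards [hg.ae_hasDerivAt_integral] with s hs hsab
    rw [(hs (uIoc_subset_uIcc hsab) a left_mem_uIcc).deriv]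
    ring
  have hibp := hF.integral_mul_deriv_eq_deriv_mul hG
  simp only [deriv_sub_const, deriv_id'', mul_one, intervalIntegral.integral_same, zero_mul,
    sub_zero, intervalIntegral.integral_congr_ae hderiv, intervalIntegral.integral_neg] at hibp
  rw [hibp]
  ring

section Primitive

variable {f f' : ℝ → ℝ} {a b : ℝ} (hf : ∀ t ∈ Icc a b, f t = f a + ∫ s in a..t, f' s)
  (hf' : IntervalIntegrable f' volume a b)

include hf hf'

theorem intervalIntegrable_of_eq_add_primitive (hab : a ≤ b) : IntervalIntegrable f volume a b :=
  (intervalIntegrable_const.add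
    (intervalIntegral.continuousOn_primitive_interval' hf' left_mem_uIcc).intervalIntegrable).congr
    fun t ht => (hf t (uIcc_of_le hab ▸ uIoc_subset_uIcc ht)).symm

theorem integral_eq_of_eq_add_primitive (hab : a ≤ b) (m : ℝ) :
    ∫ t in a..b, f t = (m - a) * f a + (b - m) * f b + ∫ s in a..b, (m - s) * f' s := by
  have hprim : IntervalIntegrable (fun t => ∫ s in a..t, f' s) volume a b :=
    (intervalIntegral.continuousOn_primitive_interval' hf' left_mem_uIcc).intervalIntegrable
  rw [intervalIntegral.integral_congr (g := fun t => f a + ∫ s in a..t, f' s)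
      (fun t ht => hf t (uIcc_of_le hab ▸ ht)),
    intervalIntegral.integral_add intervalIntegrable_const hprim, intervalIntegral.integral_const,
    integral_primitive_eq hf' m, hf b (right_mem_Icc.2 hab), smul_eq_mul]
  ring

theorem eq_add_primitive_of_le {c : ℝ} (hac : a ≤ c) :
    ∀ t ∈ Icc c b, f t = f c + ∫ s in c..t, f' s := by
  intro t ⟨hct, htb⟩
  have hab : a ≤ b := hac.trans (hct.trans htb)
  have hsub : ∀ x ∈ Icc a b, ∀ y ∈ Icc a b, IntervalIntegrable f' volume x y :=
    fun x hx y hy => hf'.mono_set (uIcc_subset_uIcc (uIcc_of_le hab ▸ hx) (uIcc_of_le hab ▸ hy))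
  have ha : a ∈ Icc a b := ⟨le_rfl, hab⟩
  have hc : c ∈ Icc a b := ⟨hac, hct.trans htb⟩
  have ht : t ∈ Icc a b := ⟨hac.trans hct, htb⟩
  rw [hf t ht, hf c hc, add_assoc,
    intervalIntegral.integral_add_adjacent_intervals (hsub a ha c hc) (hsub c hc t ht)]

end Primitive

theorem abs_integral_mul_le_of_integral_eq_zero {K g : ℝ → ℝ} {a b M Γ : ℝ} (hab : a ≤ b)
    (hK : IntervalIntegrable K volume a b) (hg : IntervalIntegrable g volume a b)
    (hKg : IntervalIntegrable (fun s => K s * g s) volume a b) (hK₀ : ∫ s in a..b, K s = 0)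
    (hKM : ∀ s ∈ Icc a b, |K s| ≤ M) (hgΓ : ∀ s ∈ Icc a b, g s ≤ Γ) :
    |∫ s in a..b, K s * g s| ≤ M * (Γ * (b - a) - ∫ s in a..b, g s) := by
  have hKΓg : IntervalIntegrable (fun s => K s * (Γ - g s)) volume a b := by
    simp only [mul_sub]
    exact (hK.mul_const Γ).sub hKg
  have hshift : ∫ s in a..b, K s * g s = -∫ s in a..b, K s * (Γ - g s) := by
    simp only [mul_sub]
    rw [intervalIntegral.integral_sub (hK.mul_const Γ) hKg, intervalIntegral.integral_mul_const,
      hK₀, zero_mul, zero_sub, neg_neg]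
  calc |∫ s in a..b, K s * g s|
      ≤ ∫ s in a..b, |K s * (Γ - g s)| := by
        rw [hshift, abs_neg]
        exact intervalIntegral.abs_integral_le_integral_abs hab
    _ ≤ ∫ s in a..b, M * (Γ - g s) := by
        refine intervalIntegral.integral_mono_on hab hKΓg.abs
          ((intervalIntegrable_const.sub hg).const_mul M) fun s hs => ?_
        rw [abs_mul, abs_of_nonneg (sub_nonneg.2 (hgΓ s hs))]
        exact mul_le_mul_of_nonneg_right (hKM s hs) (sub_nonneg.2 (hgΓ s hs))
    _ = M * (Γ * (b - a) - ∫ s in a..b, g s) := by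
        rw [intervalIntegral.integral_const_mul,
          intervalIntegral.integral_sub intervalIntegrable_const hg,
          intervalIntegral.integral_const, smul_eq_mul, mul_comm Γ]

/-- The Peano kernel of the rule `c f(0) + (1 - 2c) f(1/2) + c f(1)` on `[0, 1]`. -/
noncomputable def peanoKernel (c s : ℝ) : ℝ := if s ≤ 1 / 2 then c - s else 1 - c - s

theorem abs_peanoKernel_le {c s : ℝ} (hc : c ≤ 1 / 4) (hs : s ∈ Icc (0 : ℝ) 1) :
    |peanoKernel c s| ≤ 1 / 2 - c := by
  obtain ⟨hs₀, hs₁⟩ := hs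
  unfold peanoKernel
  split_ifs with h <;> rw [abs_le] <;> constructor <;> linarith

theorem intervalIntegrable_peanoKernel (c : ℝ) :
    IntervalIntegrable (peanoKernel c) volume 0 1 :=
  intervalIntegrable_ite_le (by norm_num) (by norm_num)
    ((by fun_prop : Continuous fun s : ℝ => c - s).intervalIntegrable _ _)
    ((by fun_prop : Continuous fun s : ℝ => 1 - c - s).intervalIntegrable _ _)

theorem integral_peanoKernel (c : ℝ) : ∫ s in (0 : ℝ)..1, peanoKernel c s = 0 := by
  unfold peanoKernel
  rw [integral_ite_le (by norm_num) (by norm_num)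
      ((by fun_prop : Continuous fun s : ℝ => c - s).intervalIntegrable _ _)
      ((by fun_prop : Continuous fun s : ℝ => 1 - c - s).intervalIntegrable _ _),
    intervalIntegral.integral_sub intervalIntegrable_const intervalIntegral.intervalIntegrable_id,
    intervalIntegral.integral_sub intervalIntegrable_const intervalIntegral.intervalIntegrable_id]
  simp only [intervalIntegral.integral_const, integral_id, smul_eq_mul]
  ring

section KernelMul

variable {g : ℝ → ℝ} (hg : IntervalIntegrable g volume 0 1) (c : ℝ)

include hg

theorem intervalIntegrable_peanoKernel_mul :
    IntervalIntegrable (fun s => peanoKernel c s * g s) volume 0 1 := by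
  simp only [peanoKernel, ite_mul]
  exact intervalIntegrable_ite_le (by norm_num) (by norm_num)
    ((hg.mono_set (uIcc_subset_uIcc_left (by norm_num))).continuousOn_mul (by fun_prop))
    ((hg.mono_set (uIcc_subset_uIcc_right (by norm_num))).continuousOn_mul (by fun_prop))

theorem integral_peanoKernel_mul :
    ∫ s in (0 : ℝ)..1, peanoKernel c s * g s
      = (∫ s in (0 : ℝ)..1 / 2, (c - s) * g s)
        + ∫ s in (1 / 2 : ℝ)..1, (1 - c - s) * g s := by
  simp only [peanoKernel, ite_mul]
  exact integral_ite_le (by norm_num) (by norm_num)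
    ((hg.mono_set (uIcc_subset_uIcc_left (by norm_num))).continuousOn_mul (by fun_prop))
    ((hg.mono_set (uIcc_subset_uIcc_right (by norm_num))).continuousOn_mul (by fun_prop))

end KernelMul

theorem integral_sub_quadrature_eq_integral_peanoKernel_mul {f f' : ℝ → ℝ}
    (hf : ∀ t ∈ Icc (0 : ℝ) 1, f t = f 0 + ∫ s in (0 : ℝ)..t, f' s)
    (hf' : IntervalIntegrable f' volume 0 1) (c : ℝ) :
    (∫ t in (0 : ℝ)..1, f t) - c * f 0 - (1 - 2 * c) * f (1 / 2) - c * f 1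
      = ∫ s in (0 : ℝ)..1, peanoKernel c s * f' s := by
  have hleft : uIcc (0 : ℝ) (1 / 2) ⊆ uIcc 0 1 := uIcc_subset_uIcc_left (by norm_num)
  have hright : uIcc (1 / 2 : ℝ) 1 ⊆ uIcc 0 1 := uIcc_subset_uIcc_right (by norm_num)
  have hfi := intervalIntegrable_of_eq_add_primitive hf hf' zero_le_one
  rw [← intervalIntegral.integral_add_adjacent_intervals
      (hfi.mono_set hleft) (hfi.mono_set hright),
    integral_eq_of_eq_add_primitive (fun t ht => hf t ⟨ht.1, ht.2.trans (by norm_num)⟩)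
      (hf'.mono_set hleft) (by norm_num) c,
    integral_eq_of_eq_add_primitive (eq_add_primitive_of_le hf hf' (by norm_num))
      (hf'.mono_set hright) (by norm_num) (1 - c),
    integral_peanoKernel_mul hf']
  ring

theorem abs_integral_sub_quadrature_le {f f' : ℝ → ℝ} {Γ c : ℝ}
    (hf : ∀ t ∈ Icc (0 : ℝ) 1, f t = f 0 + ∫ s in (0 : ℝ)..t, f' s)
    (hf' : IntervalIntegrable f' volume 0 1) (hf'Γ : ∀ t ∈ Icc (0 : ℝ) 1, f' t ≤ Γ)
    (hc : c ≤ 1 / 4) :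
    |(∫ t in (0 : ℝ)..1, f t) - c * f 0 - (1 - 2 * c) * f (1 / 2) - c * f 1|
      ≤ (1 / 2 - c) * (Γ - (f 1 - f 0)) := by
  have hS : f 1 - f 0 = ∫ s in (0 : ℝ)..1, f' s := by
    rw [hf 1 (right_mem_Icc.2 zero_le_one)]
    ring
  have h := abs_integral_mul_le_of_integral_eq_zero zero_le_one
    (intervalIntegrable_peanoKernel c) hf' (intervalIntegrable_peanoKernel_mul hf' c)
    (integral_peanoKernel c) (fun s hs => abs_peanoKernel_le hc hs) hf'Γ
  rwa [sub_zero, mul_one, ← hS,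
    ← integral_sub_quadrature_eq_integral_peanoKernel_mul hf hf'] at h

theorem stmt_9 (f f' : ℝ → ℝ) (Γ₁ : ℝ)
    (hac : ∀ t ∈ Icc (0:ℝ) 1, f t = f 0 + ∫ s in (0:ℝ)..t, f' s)
    (hint : IntervalIntegrable f' volume 0 1)
    (hbd : ∀ t ∈ Icc (0:ℝ) 1, f' t ≤ Γ₁) :
    |(∫ t in (0:ℝ)..1, f t) - Real.sqrt 2 / 8 * f 0
        - (1 - Real.sqrt 2 / 4) * f (1/2) - Real.sqrt 2 / 8 * f 1|
      ≤ (1/2 - Real.sqrt 2 / 8) * (Γ₁ - (f 1 - f 0)) := by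
  have hsqrt : Real.sqrt 2 ≤ 2 := by
    rw [Real.sqrt_le_left zero_le_two]
    norm_num
  have h := abs_integral_sub_quadrature_le hac hint hbd (c := Real.sqrt 2 / 8) (by linarith)
  rwa [show 1 - 2 * (Real.sqrt 2 / 8) = 1 - Real.sqrt 2 / 4 by ring] at h
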